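/- arXiv:1502.00067 — 2 statements merged into one kernel-verified Lean document; each statement's English description precedes it below -/
import Mathlib

section
/- Let r₁ and r be natural numbers with r ≥ r₁ + 2, and let a, b be real numbers with 1 - 2^{-r} ≤ a ≤ 1 and 0 ≤ b ≤ 2^{-r}. Then a²/(a² + b²) ≥ 1 - 2^{-r₁}. -/
/-! With `ε = 2⁻ʳ` and `δ = 2⁻ʳ¹` we have `4ε ≤ δ ≤ 1`, so `a ≥ 3/4` and `b² ≤ ε² ≤ δ/16 ≤ δa²`;
and `b² ≤ δa²` already forces `a²/(a² + b²) ≥ 1 - δ`. -/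

theorem one_sub_le_div_add_of_le_mul {x y δ : ℝ} (hx : 0 < x) (hy : 0 ≤ y) (h : y ≤ δ * x) :
    1 - δ ≤ x / (x + y) := by
  have hδ : 0 ≤ δ := nonneg_of_mul_nonneg_left (hy.trans h) hx
  rw [le_div_iff₀ (by positivity)]
  nlinarith [mul_nonneg hδ hy]

theorem one_sub_le_sq_div_sq_add_sq {a b ε δ : ℝ} (ha : 1 - ε ≤ a) (hb₀ : 0 ≤ b) (hb : b ≤ ε)
    (hε : 4 * ε ≤ δ) (hδ : δ ≤ 1) : 1 - δ ≤ a ^ 2 / (a ^ 2 + b ^ 2) := by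
  have ha₀ : 3 / 4 ≤ a := by linarith
  have hδ₀ : 0 ≤ δ := by linarith
  have hb_sq : b ^ 2 ≤ δ * a ^ 2 :=
    calc b ^ 2 ≤ ε ^ 2 := pow_le_pow_left₀ hb₀ hb 2
      _ ≤ δ * (1 / 16) := by nlinarith
      _ ≤ δ * a ^ 2 := by gcongr; nlinarith
  exact one_sub_le_div_add_of_le_mul (by positivity) (sq_nonneg b) hb_sq

theorem stmt_7_general (r₁ r : ℕ) (hr : r₁ + 2 ≤ r) (a b : ℝ)
    (hal : 1 - (1/2 : ℝ)^r ≤ a)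
    (hbl : 0 ≤ b) (hbu : b ≤ (1/2 : ℝ)^r) :
    a^2 / (a^2 + b^2) ≥ 1 - (1/2 : ℝ)^r₁ := by
  have hε : 4 * (1/2 : ℝ) ^ r ≤ (1/2) ^ r₁ :=
    calc 4 * (1/2 : ℝ) ^ r ≤ 4 * (1/2) ^ (r₁ + 2) := by
          gcongr 4 * ?_; exact pow_le_pow_of_le_one (by norm_num) (by norm_num) hr
      _ = (1/2) ^ r₁ := by ring
  exact one_sub_le_sq_div_sq_add_sq hal hbl hbu hε (pow_le_one₀ (by norm_num) (by norm_num))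

theorem stmt_7 (r₁ r : ℕ) (hr : r₁ + 2 ≤ r) (a b : ℝ)
    (hal : 1 - (1/2 : ℝ)^r ≤ a) (hau : a ≤ 1)
    (hbl : 0 ≤ b) (hbu : b ≤ (1/2 : ℝ)^r) :
    a^2 / (a^2 + b^2) ≥ 1 - (1/2 : ℝ)^r₁ :=
  stmt_7_general r₁ r hr a b hal hbl hbu
end

section
/- Let a and b be positive real numbers and let x be a real number with 0 ≤ x ≤ 1/2. If a ≥ (1-x)²·b, then 3a/(3a + b) ≥ 1/2 + 1/22 - (12/11)·x. -/
theorem div_add_one_le_div_add {a b c : ℝ} (hb : 0 < b) (hc : 0 ≤ c) (h : c * b ≤ a) :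
    c / (c + 1) ≤ a / (a + b) := by
  have ha : 0 ≤ a := (mul_nonneg hc hb.le).trans h
  rw [div_le_div_iff₀ (by positivity) (by positivity)]
  linarith

theorem linear_le_three_mul_sq_div {x : ℝ} (hx : 0 ≤ x) :
    1 / 2 + 1 / 22 - 12 / 11 * x ≤ 3 * (1 - x) ^ 2 / (3 * (1 - x) ^ 2 + 1) := by
  rw [le_div_iff₀ (by positivity)]
  -- in `y = 1 - x ≤ 1`: `36 y³ - 51 y² + 12 y - 6 ≤ 0`, as `y³ ≤ y²` when `y ≥ 0` and `-15 y² + 12 y - 6 < 0`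
  nlinarith [sq_nonneg (1 - x), mul_nonneg hx (sq_nonneg (1 - x)), sq_nonneg (x - 1 / 2)]

theorem stmt_15_general (a b x : ℝ) (hb : 0 < b)
    (hx0 : 0 ≤ x) (h : a ≥ (1 - x)^2 * b) :
    3 * a / (3 * a + b) ≥ 1/2 + 1/22 - (12/11) * x :=
  (linear_le_three_mul_sq_div hx0).trans <|
    div_add_one_le_div_add hb (by positivity) (by linarith)

theorem stmt_15 (a b x : ℝ) (ha : 0 < a) (hb : 0 < b)
    (hx0 : 0 ≤ x) (hx1 : x ≤ 1/2) (h : a ≥ (1 - x)^2 * b) :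
    3 * a / (3 * a + b) ≥ 1/2 + 1/22 - (12/11) * x :=
  stmt_15_general a b x hb hx0 h
end
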